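/- arXiv:2203.16097 — 3 statements merged into one kernel-verified Lean document; each statement's English description precedes it below -/
import Mathlib

section
/- Let μ⁻ < μ⁺ be real numbers, let n⁺ > 0 and n⁻ > 0 be real numbers (the numbers of positive and negative neighbors), and let p, q ∈ (0, 1]. Define E_origin = (n⁺·μ⁺ + n⁻·μ⁻)/(n⁺ + n⁻) and E_filter = (p·n⁺·μ⁺ + q·n⁻·μ⁻)/(p·n⁺ + q·n⁻). Then E_filter > E_origin if and only if p > q. -/
/-- **Proposition 2 (NEGCN, filtering process).**
With `μm < μp`, `n⁺, n⁻ > 0` and retention probabilities `p, q ∈ (0,1]`,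
the filtered expectation `E_filter = (p n⁺ μ⁺ + q n⁻ μ⁻)/(p n⁺ + q n⁻)` exceeds the
original expectation `E_origin = (n⁺ μ⁺ + n⁻ μ⁻)/(n⁺ + n⁻)` iff `p > q`. -/
theorem filter_expectation_gt_iff
    (μm μp np nm p q : ℝ) (hμ : μm < μp) (hnp : 0 < np) (hnm : 0 < nm)
    (hp0 : 0 < p) (hp1 : p ≤ 1) (hq0 : 0 < q) (hq1 : q ≤ 1) :
    (p * np * μp + q * nm * μm) / (p * np + q * nm) >
        (np * μp + nm * μm) / (np + nm) ↔ p > q := by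
  have h1 : 0 < p * np + q * nm := by positivity
  have h2 : 0 < np + nm := by positivity
  rw [gt_iff_lt, div_lt_div_iff₀ h2 h1]
  have key : (p * np * μp + q * nm * μm) * (np + nm) -
      (np * μp + nm * μm) * (p * np + q * nm) = (p - q) * (np * nm * (μp - μm)) := by ring
  have hpos : 0 < np * nm * (μp - μm) := by
    have := sub_pos.mpr hμ; positivity
  constructor
  · intro h
    by_contra hc
    push_neg at hc
    nlinarith [mul_nonpos_of_nonpos_of_nonneg (sub_nonpos.mpr hc) hpos.le]
  · intro h
    nlinarith [mul_pos (sub_pos.mpr h) hpos]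
end

section
/- Let μ⁻ < μ⁺ be real numbers, let n⁺ > 0, n⁻ > 0 and n' > 0 be real numbers, and let p_pre ∈ [0, 1]. Define E_origin = (n⁺·μ⁺ + n⁻·μ⁻)/(n⁺ + n⁻) and E_adder = ((n⁺ + p_pre·n')·μ⁺ + (n⁻ + (1 − p_pre)·n')·μ⁻)/(n⁺ + n⁻ + n'). Then E_adder > E_origin if and only if p_pre > n⁺/(n⁺ + n⁻). -/
/-- **Proposition 3 (NEGCN, adding process).**
With `μm < μp`, `n⁺, n⁻, n' > 0` and precision `p_pre ∈ [0,1]`, the expectation after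
adding `n'` predicted-positive neighbors,
`E_adder = ((n⁺ + p_pre n') μ⁺ + (n⁻ + (1 - p_pre) n') μ⁻)/(n⁺ + n⁻ + n')`,
exceeds `E_origin = (n⁺ μ⁺ + n⁻ μ⁻)/(n⁺ + n⁻)` iff `p_pre > n⁺/(n⁺ + n⁻)`. -/
theorem adder_expectation_gt_iff
    (μm μp np nm n' ppre : ℝ) (hμ : μm < μp) (hnp : 0 < np) (hnm : 0 < nm)
    (hn' : 0 < n') (hppre0 : 0 ≤ ppre) (hppre1 : ppre ≤ 1) :
    ((np + ppre * n') * μp + (nm + (1 - ppre) * n') * μm) / (np + nm + n') >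
        (np * μp + nm * μm) / (np + nm) ↔ ppre > np / (np + nm) := by
  have h1 : 0 < np + nm := by linarith
  have h2 : 0 < np + nm + n' := by linarith
  rw [gt_iff_lt, div_lt_div_iff₀ h1 h2, gt_iff_lt, div_lt_iff₀ h1]
  constructor <;> intro h <;> nlinarith [mul_pos hn' (sub_pos.mpr hμ), mul_pos h1 h2]
end

section
/- Let n⁺ > 0, n⁻ > 0 and n' > 0 be real numbers, let p, q ∈ (0, 1] with p > q, and let p_pre ∈ [0, 1] with p_pre > n⁺/(n⁺ + n⁻). Then the positive ratio of the neighbor-enhanced graph obtained by first filtering and then adding, namely r_NE = (p·n⁺ + p_pre·n')/(p·n⁺ + q·n⁻ + n'), is strictly greater than the original positive ratio r = n⁺/(n⁺ + n⁻). -/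
/-- **Combined NEGCN refinement (filtering then adding).**
With `n⁺, n⁻, n' > 0`, retention probabilities `p, q ∈ (0,1]` with `p > q`, and
precision `p_pre ∈ [0,1]` with `p_pre > n⁺/(n⁺ + n⁻)`, the positive ratio of the
neighbor-enhanced graph, `(p n⁺ + p_pre n')/(p n⁺ + q n⁻ + n')`, strictly exceeds
the original positive ratio `n⁺/(n⁺ + n⁻)`. -/
theorem ne_graph_positive_ratio_gt
    (np nm n' p q ppre : ℝ) (hnp : 0 < np) (hnm : 0 < nm) (hn' : 0 < n')
    (hp0 : 0 < p) (hp1 : p ≤ 1) (hq0 : 0 < q) (hq1 : q ≤ 1) (hpq : p > q)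
    (hppre0 : 0 ≤ ppre) (hppre1 : ppre ≤ 1) (hppre : ppre > np / (np + nm)) :
    (p * np + ppre * n') / (p * np + q * nm + n') > np / (np + nm) := by
  have hs : 0 < np + nm := by linarith
  have hD : 0 < p * np + q * nm + n' := by positivity
  rw [gt_iff_lt, div_lt_div_iff₀ hs hD]
  have h2 : np < ppre * (np + nm) := by
    rw [gt_iff_lt, div_lt_iff₀ hs] at hppre; linarith
  nlinarith [mul_pos hnp hnm, mul_pos hn' hs]
end
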